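/- Let ω = e^{2πi/3} and let λ ∈ ℂ∖{0} with Im λ ≥ 0, z = λ^{1/3}, and assume |λ^{1/3} − 2πn/√3| ≥ 1 for every integer n ≥ 0 and |(−λ)^{1/3} − 2πn/√3| ≥ 1 for every integer n ≥ 1 (cube roots with argument in (−π/3, π/3]). Then |Δ₀(λ)| > |e^{(ω²+2)z}| / (24√3 |λ|). -/

import Mathlib

open Complex

/-- The characteristic function of the unperturbed three-point Dirichlet problem:
`Δ₀(λ) = (4/(3√3 λ)) sin(√3z/2)(cosh(3z/2) − cos(√3z/2))`, `z = λ^{1/3}` the cube root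
with argument in `(−π/3, π/3]`. -/
noncomputable def Delta0 (lam : ℂ) : ℂ :=
  4 / (3 * (Real.sqrt 3 : ℂ) * lam) *
    Complex.sin ((Real.sqrt 3 : ℂ) * lam ^ ((1:ℂ)/3) / 2) *
    (Complex.cosh (3 * lam ^ ((1:ℂ)/3) / 2)
      - Complex.cos ((Real.sqrt 3 : ℂ) * lam ^ ((1:ℂ)/3) / 2))

/-!
By the identity `cosh a - cos b = -2 sin ((ia + b)/2) sin ((ia - b)/2)`,
`Δ₀(λ) = (8/(3√3 λ)) sin w₁ sin w₂ sin w₃` with `w₁ = √3z/2`, `w₂ = √3ωz/2`, `w₃ = √3ω²z/2`,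
and since `arg z ∈ [0, π/3]` the imaginary parts add up to
`|Im w₁| + |Im w₂| + |Im w₃| = Re ((ω² + 2) z)`. So it suffices that `|sin w| > e^{|Im w|}/4`
for each factor. This holds when `|Im w| ≥ 3/8`, by `|sin w| ≥ sinh |Im w|`, and when `w` stays
`√3/2` away from `πℤ`, by Jordan's inequality for `sin (Re w)`. The disc conditions give the
latter for `w₁` and, through `(-λ)^{1/3} = -ωz`, for `w₂`; `w₃` always has `|Im w₃| ≥ 3/8`.
-/

open scoped Real

theorem Complex.sq_norm_sub_ofReal (u : ℂ) (t : ℝ) : ‖u - t‖ ^ 2 = (u.re - t) ^ 2 + u.im ^ 2 := by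
  rw [Complex.sq_norm, normSq_apply]
  simp only [sub_re, sub_im, ofReal_re, ofReal_im, sub_zero]
  ring

theorem Complex.norm_sin_sq (w : ℂ) :
    ‖sin w‖ ^ 2 = Real.sin w.re ^ 2 + Real.sinh w.im ^ 2 := by
  rw [Complex.sq_norm, Complex.sin_eq, ← ofReal_sin, ← ofReal_cos, ← ofReal_sinh, ← ofReal_cosh,
    normSq_apply]
  simp only [add_re, add_im, mul_re, mul_im, I_re, I_im, ofReal_re, ofReal_im]
  nlinarith [Real.sin_sq_add_cos_sq w.re, Real.cosh_sq w.im]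

theorem Complex.abs_sin_re_le_norm_sin (w : ℂ) : |Real.sin w.re| ≤ ‖sin w‖ :=
  abs_le_of_sq_le_sq' (by rw [sq_abs, norm_sin_sq]; nlinarith [sq_nonneg (Real.sinh w.im)])
    (norm_nonneg _) |>.2

theorem Complex.sinh_abs_im_le_norm_sin (w : ℂ) : Real.sinh |w.im| ≤ ‖sin w‖ := by
  rw [← Real.abs_sinh]
  exact abs_le_of_sq_le_sq' (by rw [sq_abs, norm_sin_sq]; nlinarith [sq_nonneg (Real.sin w.re)])
    (norm_nonneg _) |>.2

theorem Real.exp_div_four_lt_sinh {t : ℝ} (ht : 3 / 8 ≤ t) : exp t / 4 < sinh t := by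
  have h2 : 2 < exp (2 * t) :=
    calc (2 : ℝ) < 1 + 3 / 4 + (3 / 4) ^ 2 / 2 := by norm_num
      _ ≤ exp (3 / 4) := quadratic_le_exp_of_nonneg (by norm_num)
      _ ≤ exp (2 * t) := exp_le_exp.2 (by linarith)
  have hinv : exp (-t) * exp t = 1 := by rw [← exp_add]; simp
  rw [two_mul, exp_add] at h2
  rw [sinh_eq]
  nlinarith [exp_pos t, exp_pos (-t)]

theorem Complex.exp_abs_im_div_four_lt_norm_sin_of_le_abs_im {w : ℂ} (h : 3 / 8 ≤ |w.im|) :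
    Real.exp |w.im| / 4 < ‖sin w‖ :=
  (Real.exp_div_four_lt_sinh h).trans_le (sinh_abs_im_le_norm_sin w)

theorem Complex.exp_abs_im_div_four_lt_norm_sin {w : ℂ}
    (h : ∀ n : ℤ, √3 / 2 ≤ ‖w - n * π‖) : Real.exp |w.im| / 4 < ‖sin w‖ := by
  by_cases him : 3 / 8 ≤ |w.im|
  · exact exp_abs_im_div_four_lt_norm_sin_of_le_abs_im him
  push Not at him
  set n : ℤ := round (w.re / π)
  set r := w.re - n * π
  have hr_le : |r| ≤ π / 2 := by
    have hr : r = (w.re / π - n) * π := by simp only [r]; field_simp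
    rw [hr, abs_mul, abs_of_pos Real.pi_pos]
    nlinarith [abs_sub_round (w.re / π), Real.pi_pos]
  have hr_gt : 3 / 4 < |r| := by
    have hdist : 3 / 4 ≤ r ^ 2 + w.im ^ 2 := by
      have h3 : (√3 / 2) ^ 2 = 3 / 4 := by rw [div_pow, Real.sq_sqrt] <;> norm_num
      have hsq : ‖w - n * π‖ ^ 2 = r ^ 2 + w.im ^ 2 := by
        have := sq_norm_sub_ofReal w (n * π)
        push_cast at this
        exact this
      rw [← h3, ← hsq]
      exact pow_le_pow_left₀ (by positivity) (h n) 2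
    nlinarith [sq_abs r, sq_abs w.im, abs_nonneg r, abs_nonneg w.im]
  have hsin : |Real.sin r| = |Real.sin w.re| := by
    rw [Real.sin_sub_int_mul_pi, abs_mul, abs_neg_one_zpow, one_mul]
  have hexp : Real.exp |w.im| ≤ 8 / 5 :=
    calc Real.exp |w.im| ≤ Real.exp (3 / 8) := Real.exp_le_exp.2 him.le
      _ ≤ 1 / (1 - 3 / 8) := Real.exp_bound_div_one_sub_of_interval (by norm_num) (by norm_num)
      _ = 8 / 5 := by norm_num
  calc Real.exp |w.im| / 4 < 2 / π * (3 / 4) := by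
        rw [div_mul_eq_mul_div, lt_div_iff₀ Real.pi_pos]; nlinarith [Real.pi_lt_d2]
    _ ≤ 2 / π * |r| := by gcongr
    _ ≤ |Real.sin r| := Real.mul_abs_le_abs_sin hr_le
    _ ≤ ‖sin w‖ := hsin ▸ abs_sin_re_le_norm_sin w

theorem Complex.arg_cpow_one_third (x : ℂ) : arg (x ^ ((1 : ℂ) / 3)) = arg x / 3 := by
  rcases eq_or_ne x 0 with rfl | hx
  · simp
  have him : (log x * (1 / 3)).im = arg x / 3 := by simp [log_im, div_eq_mul_inv]
  rw [cpow_def_of_ne_zero hx, arg_exp, him, toIocMod_eq_self]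
  constructor <;> linarith [neg_pi_lt_arg x, arg_le_pi x, Real.pi_pos]

theorem Complex.im_le_sqrt_three_mul_re {z : ℂ} (h0 : 0 ≤ arg z) (h : arg z ≤ π / 3) :
    z.im ≤ √3 * z.re := by
  have hsin : 0 ≤ Real.sin (π / 3 - arg z) :=
    Real.sin_nonneg_of_nonneg_of_le_pi (by linarith) (by linarith [Real.pi_pos])
  rw [Real.sin_sub, Real.sin_pi_div_three, Real.cos_pi_div_three] at hsin
  rw [← norm_mul_cos_arg, ← norm_mul_sin_arg]
  nlinarith [norm_nonneg z]

theorem Complex.norm_div_two_le_re {z : ℂ} (h : |arg z| ≤ π / 3) : ‖z‖ / 2 ≤ z.re := by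
  have hcos : 1 / 2 ≤ Real.cos (arg z) := by
    rw [← Real.cos_abs, ← Real.cos_pi_div_three]
    exact Real.cos_le_cos_of_nonneg_of_le_pi (abs_nonneg _) (by linarith [Real.pi_pos]) h
  rw [← norm_mul_cos_arg]
  nlinarith [norm_nonneg z]

theorem Complex.abs_arg_cpow_one_third_le (x : ℂ) : |arg (x ^ ((1 : ℂ) / 3))| ≤ π / 3 := by
  rw [arg_cpow_one_third, abs_le]
  constructor <;> linarith [neg_pi_lt_arg x, arg_le_pi x]

theorem Complex.neg_cpow_eq_exp_mul_cpow {x : ℂ} (hx : 0 < x.im ∨ x.im = 0 ∧ x.re < 0) (s : ℂ) :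
    (-x) ^ s = exp (-(π * I * s)) * x ^ s := by
  have hx0 : x ≠ 0 := by rintro rfl; simp at hx
  have hlog : log (-x) = log x - π * I := by
    apply Complex.ext <;> simp [log_re, log_im, arg_neg_eq_arg_sub_pi_iff.2 hx]
  rw [cpow_def_of_ne_zero (neg_ne_zero.2 hx0), cpow_def_of_ne_zero hx0, hlog, ← exp_add]
  ring_nf

theorem Complex.exp_two_pi_mul_I_div_three : exp (2 * π * I / 3) = (-1 + √3 * I) / 2 := by
  have h : 2 * (π : ℂ) * I / 3 = ((π - π / 3 : ℝ) : ℂ) * I := by push_cast; ring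
  rw [h, exp_mul_I, ← ofReal_cos, ← ofReal_sin, Real.cos_pi_sub, Real.sin_pi_sub,
    Real.cos_pi_div_three, Real.sin_pi_div_three]
  push_cast; ring

theorem Complex.exp_neg_pi_mul_I_div_three : exp (-(π * I * (1 / 3))) = (1 - √3 * I) / 2 := by
  have h : -(π * I * (1 / 3)) = ((-(π / 3) : ℝ) : ℂ) * I := by push_cast; ring
  rw [h, exp_mul_I, ← ofReal_cos, ← ofReal_sin, Real.cos_neg, Real.sin_neg,
    Real.cos_pi_div_three, Real.sin_pi_div_three]
  push_cast; ring

namespace CubeRootOfUnity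

variable {ω : ℂ}

theorem sq_eq (hω : ω = (-1 + √3 * I) / 2) : ω ^ 2 = (-1 - √3 * I) / 2 := by
  have hs : (√3 : ℂ) ^ 2 = 3 := by norm_cast; simp
  rw [hω]; linear_combination (I ^ 2 / 4) * hs + (3 / 4 : ℂ) * I_sq

theorem norm_eq_one (hω : ω = (-1 + √3 * I) / 2) : ‖ω‖ = 1 := by
  rw [hω, ← exp_two_pi_mul_I_div_three, norm_exp]
  simp

theorem im_sqrt_three_mul_mul_div_two (hω : ω = (-1 + √3 * I) / 2) (z : ℂ) :
    (√3 * (ω * z) / 2).im = (3 * z.re - √3 * z.im) / 4 := by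
  have hs : √3 ^ 2 = 3 := Real.sq_sqrt (by norm_num)
  subst hω
  rw [div_ofNat_im, im_ofReal_mul]
  simp only [mul_im, div_ofNat_re, div_ofNat_im, add_re, add_im, neg_re, neg_im, one_re, one_im,
    re_ofReal_mul, I_re, I_im]
  linear_combination (z.re / 4) * hs

theorem im_sqrt_three_mul_sq_mul_div_two (hω : ω = (-1 + √3 * I) / 2) (z : ℂ) :
    (√3 * (ω ^ 2 * z) / 2).im = -(3 * z.re + √3 * z.im) / 4 := by
  have hs : √3 ^ 2 = 3 := Real.sq_sqrt (by norm_num)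
  rw [sq_eq hω, div_ofNat_im, im_ofReal_mul]
  simp only [mul_im, div_ofNat_re, div_ofNat_im, sub_re, sub_im, neg_re, neg_im, one_re, one_im,
    re_ofReal_mul, I_re, I_im]
  linear_combination (-z.re / 4) * hs

theorem re_sq_add_two_mul (hω : ω = (-1 + √3 * I) / 2) (z : ℂ) :
    ((ω ^ 2 + 2) * z).re = (3 * z.re + √3 * z.im) / 2 := by
  rw [sq_eq hω]
  simp only [mul_re, add_re, div_ofNat_re, sub_re, neg_re, one_re, ofReal_re, I_re, mul_zero,
    ofReal_im, I_im, mul_one, sub_self, sub_zero, re_ofNat, add_im, div_ofNat_im, sub_im, neg_im,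
    one_im, neg_zero, mul_im, add_zero, zero_sub, im_ofNat]
  ring

theorem abs_im_add_abs_im_add_abs_im (hω : ω = (-1 + √3 * I) / 2) {z : ℂ} (h0 : 0 ≤ z.im)
    (h : z.im ≤ √3 * z.re) :
    |(√3 * z / 2).im| + |(√3 * (ω * z) / 2).im| + |(√3 * (ω ^ 2 * z) / 2).im| =
      ((ω ^ 2 + 2) * z).re := by
  have hs : √3 ^ 2 = 3 := Real.sq_sqrt (by norm_num)
  have hre : 0 ≤ z.re := by nlinarith [Real.sqrt_nonneg 3]
  rw [im_sqrt_three_mul_mul_div_two hω, im_sqrt_three_mul_sq_mul_div_two hω, re_sq_add_two_mul hω,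
    div_ofNat_im, im_ofReal_mul, abs_of_nonneg (by positivity),
    abs_of_nonneg (by nlinarith [Real.sqrt_nonneg 3]),
    abs_of_nonpos (by nlinarith [Real.sqrt_nonneg 3])]
  ring

theorem cosh_sub_cos_eq (hω : ω = (-1 + √3 * I) / 2) (z : ℂ) :
    cosh (3 * z / 2) - cos (√3 * z / 2) =
      2 * sin (√3 * (ω * z) / 2) * sin (√3 * (ω ^ 2 * z) / 2) := by
  have hs : (√3 : ℂ) ^ 2 = 3 := by norm_cast; simp
  rw [← cos_mul_I, cos_sub_cos]
  have h1 : (3 * z / 2 * I + √3 * z / 2) / 2 = -(√3 * (ω ^ 2 * z) / 2) := by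
    rw [sq_eq hω]; linear_combination (-z * I / 4) * hs
  have h2 : (3 * z / 2 * I - √3 * z / 2) / 2 = √3 * (ω * z) / 2 := by
    rw [hω]; linear_combination (-z * I / 4) * hs
  rw [h1, h2, sin_neg]; ring

end CubeRootOfUnity

theorem Complex.norm_le_norm_sub_ofReal {u : ℂ} {t : ℝ} (h : t * u.re ≤ 0) : ‖u‖ ≤ ‖u - t‖ := by
  rw [← sq_le_sq₀ (norm_nonneg _) (norm_nonneg _), sq_norm_sub_ofReal, Complex.sq_norm,
    normSq_apply]
  nlinarith [sq_nonneg t]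

theorem Complex.sqrt_three_div_two_le_norm_sub_int_mul_pi {u : ℂ}
    (h : ∀ n : ℤ, 1 ≤ ‖u - ((2 * π * n / √3 : ℝ) : ℂ)‖) (n : ℤ) :
    √3 / 2 ≤ ‖√3 * u / 2 - n * π‖ := by
  have hs : (√3 : ℂ) ≠ 0 := by simp
  have hscale : √3 * u / 2 - n * π = ((√3 / 2 : ℝ) : ℂ) * (u - ((2 * π * n / √3 : ℝ) : ℂ)) := by
    push_cast; field_simp
  rw [hscale, norm_mul, norm_real, Real.norm_of_nonneg (by positivity)]
  exact le_mul_of_one_le_right (by positivity) (h n)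

theorem exp_abs_im_div_four_lt_norm_sin_sqrt_three_mul_div_two {u : ℂ} (hre : 0 ≤ u.re)
    (hu : 1 ≤ ‖u‖) (h : ∀ n : ℕ, 1 ≤ n → 1 ≤ ‖u - ((2 * π * n / √3 : ℝ) : ℂ)‖) :
    Real.exp |(√3 * u / 2).im| / 4 < ‖sin (√3 * u / 2)‖ := by
  refine exp_abs_im_div_four_lt_norm_sin (sqrt_three_div_two_le_norm_sub_int_mul_pi fun n => ?_)
  rcases n with (_ | m) | m
  · simpa using hu
  · exact_mod_cast h (m + 1) m.succ_pos
  · refine hu.trans (norm_le_norm_sub_ofReal (mul_nonpos_of_nonpos_of_nonneg ?_ hre))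
    rw [Int.cast_negSucc, mul_neg, neg_div]
    exact neg_nonpos.2 (by positivity)

theorem exp_abs_im_div_four_lt_norm_sin_sqrt_three_mul_omega_mul {ω lam : ℂ}
    (hω : ω = (-1 + √3 * I) / 2) (him : 0 ≤ lam.im) (hz : 1 ≤ ‖lam ^ ((1 : ℂ) / 3)‖)
    (h : ∀ n : ℕ, 1 ≤ n → 1 ≤ ‖(-lam) ^ ((1 : ℂ) / 3) - ((2 * π * n / √3 : ℝ) : ℂ)‖) :
    Real.exp |(√3 * (ω * lam ^ ((1 : ℂ) / 3)) / 2).im| / 4 <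
      ‖sin (√3 * (ω * lam ^ ((1 : ℂ) / 3)) / 2)‖ := by
  set z := lam ^ ((1 : ℂ) / 3)
  by_cases hneg : 0 < lam.im ∨ lam.im = 0 ∧ lam.re < 0
  · have hu : (-lam) ^ ((1 : ℂ) / 3) = -(ω * z) := by
      rw [neg_cpow_eq_exp_mul_cpow hneg, exp_neg_pi_mul_I_div_three, hω]; ring
    have hre : 0 ≤ ((-lam) ^ ((1 : ℂ) / 3)).re :=
      (div_nonneg (norm_nonneg _) two_pos.le).trans
        (norm_div_two_le_re (abs_arg_cpow_one_third_le _))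
    have := exp_abs_im_div_four_lt_norm_sin_sqrt_three_mul_div_two hre
      (by rwa [hu, norm_neg, norm_mul, CubeRootOfUnity.norm_eq_one hω, one_mul]) h
    rwa [hu, mul_neg, neg_div, sin_neg, norm_neg, neg_im, abs_neg] at this
  -- Here `λ ≥ 0`, so `(-λ)^{1/3}` is the conjugate of `-ωz`, but `Im w₂ = 3z/4 ≥ 3/4` instead.
  · have harg : arg z = 0 := by
      push Not at hneg
      have him0 : lam.im = 0 := le_antisymm hneg.1 him
      rw [arg_cpow_one_third, arg_eq_zero_iff.2 ⟨hneg.2 him0, him0⟩, zero_div]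
    obtain ⟨-, him0⟩ := arg_eq_zero_iff.1 harg
    have hre : 1 ≤ z.re := by rwa [← norm_mul_cos_arg, harg, Real.cos_zero, mul_one]
    apply exp_abs_im_div_four_lt_norm_sin_of_le_abs_im
    rw [CubeRootOfUnity.im_sqrt_three_mul_mul_div_two hω, him0, mul_zero, sub_zero,
      abs_of_nonneg (by positivity)]
    linarith

theorem exp_abs_im_div_four_lt_norm_sin_sqrt_three_mul_omega_sq_mul {ω z : ℂ}
    (hω : ω = (-1 + √3 * I) / 2) (him : 0 ≤ z.im) (hre : 1 / 2 ≤ z.re) :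
    Real.exp |(√3 * (ω ^ 2 * z) / 2).im| / 4 < ‖sin (√3 * (ω ^ 2 * z) / 2)‖ := by
  apply exp_abs_im_div_four_lt_norm_sin_of_le_abs_im
  rw [CubeRootOfUnity.im_sqrt_three_mul_sq_mul_div_two hω, abs_of_nonpos, neg_div, neg_neg]
  · nlinarith [Real.sqrt_nonneg 3]
  · nlinarith [Real.sqrt_nonneg 3]

theorem norm_Delta0 {ω : ℂ} (hω : ω = (-1 + √3 * I) / 2) (lam : ℂ) :
    ‖Delta0 lam‖ = 8 / (3 * √3 * ‖lam‖) * (‖sin (√3 * lam ^ ((1 : ℂ) / 3) / 2)‖ *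
      ‖sin (√3 * (ω * lam ^ ((1 : ℂ) / 3)) / 2)‖ *
      ‖sin (√3 * (ω ^ 2 * lam ^ ((1 : ℂ) / 3)) / 2)‖) := by
  rw [Delta0, CubeRootOfUnity.cosh_sub_cos_eq hω]
  simp only [norm_mul, norm_div, norm_real, Real.norm_of_nonneg (Real.sqrt_nonneg 3),
    Complex.norm_ofNat]
  ring

/-- If `λ ≠ 0`, `Im λ ≥ 0`, and `λ` lies outside all discs
`D_n` (`n ≥ 0`) and `D_{−n}` (`n ≥ 1`), then `|Δ₀(λ)| > |e^{(ω²+2)z}|/(24√3|λ|)`,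
where `z = λ^{1/3}` and `ω = e^{2πi/3}`. -/
theorem Delta0_lower_bound
    (ω lam : ℂ) (hω : ω = Complex.exp (2 * Real.pi * Complex.I / 3))
    (hlam : lam ≠ 0) (him : 0 ≤ lam.im)
    (h1 : ∀ n : ℕ,
      1 ≤ ‖lam ^ ((1:ℂ)/3) - ((2 * Real.pi * n / Real.sqrt 3 : ℝ) : ℂ)‖)
    (h2 : ∀ n : ℕ, 1 ≤ n →
      1 ≤ ‖(-lam) ^ ((1:ℂ)/3) - ((2 * Real.pi * n / Real.sqrt 3 : ℝ) : ℂ)‖) :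
    ‖Complex.exp ((ω ^ 2 + 2) * lam ^ ((1:ℂ)/3))‖
        / (24 * Real.sqrt 3 * ‖lam‖)
      < ‖Delta0 lam‖ := by
  replace hω : ω = (-1 + √3 * I) / 2 := hω.trans exp_two_pi_mul_I_div_three
  set z := lam ^ ((1 : ℂ) / 3) with hz_def
  have hz : 1 ≤ ‖z‖ := by simpa using h1 0
  have harg : 0 ≤ arg z ∧ arg z ≤ π / 3 := by
    rw [arg_cpow_one_third]
    constructor <;> linarith [arg_nonneg_iff.2 him, arg_le_pi lam]
  have hzim : 0 ≤ z.im := arg_nonneg_iff.1 harg.1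
  have hzre : ‖z‖ / 2 ≤ z.re := norm_div_two_le_re (abs_arg_cpow_one_third_le lam)
  have hB₁ := exp_abs_im_div_four_lt_norm_sin_sqrt_three_mul_div_two (by linarith) hz
    (fun n _ => h1 n)
  have hB₂ := exp_abs_im_div_four_lt_norm_sin_sqrt_three_mul_omega_mul hω him hz h2
  rw [← hz_def] at hB₂
  have hB₃ := exp_abs_im_div_four_lt_norm_sin_sqrt_three_mul_omega_sq_mul hω hzim (by linarith)
  have hprod := mul_lt_mul'' (mul_lt_mul'' hB₁ hB₂ (by positivity) (by positivity)) hB₃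
    (by positivity) (by positivity)
  have hc : 0 < 8 / (3 * √3 * ‖lam‖) := by have := norm_pos_iff.2 hlam; positivity
  rw [norm_Delta0 hω, norm_exp, ← CubeRootOfUnity.abs_im_add_abs_im_add_abs_im hω hzim
    (im_le_sqrt_three_mul_re harg.1 harg.2), Real.exp_add, Real.exp_add]
  refine lt_of_eq_of_lt ?_ (mul_lt_mul_of_pos_left hprod hc)
  field_simp
  ring
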